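/- arXiv:2311.17306 — 2 statements merged into one kernel-verified Lean document; each statement's English description precedes it below -/
import Mathlib

section
/- The information system U_1 = (ℕ, {l_i : i ∈ ℕ}), where l_i(j) = 1 iff j > i, satisfies the condition of reduction with parameter 2: every compatible finite system of equations over attributes of U_1 has a subsystem of at most 2 equations with the same solution set in ℕ. -/
/-- The information system `U₁ = (ℕ, {lᵢ})` with `lᵢ(j) = 1 ↔ j > i` satisfies the
condition of reduction with parameter 2: every compatible finite system of equations
`l_{p.1}(x) = p.2` (encoded by pairs `p = (i, δ)`) has a subsystem of at most 2 equations
with the same solution set in ℕ. -/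
theorem stmt_5 (S : Finset (ℕ × Bool))
    (hcompat : ∃ x : ℕ, ∀ p ∈ S, decide (p.1 < x) = p.2) :
    ∃ T ⊆ S, T.card ≤ 2 ∧
      {x : ℕ | ∀ p ∈ T, decide (p.1 < x) = p.2} =
        {x : ℕ | ∀ p ∈ S, decide (p.1 < x) = p.2} := by
  classical
  set A := S.filter (fun p => p.2 = true) with hA'
  set B := S.filter (fun p => p.2 = false) with hB'
  by_cases hA : A.Nonempty <;> by_cases hB : B.Nonempty
  · obtain ⟨a, haA, hamax⟩ := A.exists_max_image Prod.fst hA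
    obtain ⟨b, hbB, hbmin⟩ := B.exists_min_image Prod.fst hB
    refine ⟨{a, b}, ?_, ?_, ?_⟩
    · intro p hp
      simp only [Finset.mem_insert, Finset.mem_singleton] at hp
      rcases hp with rfl | rfl
      · exact (Finset.mem_filter.mp haA).1
      · exact (Finset.mem_filter.mp hbB).1
    · exact (Finset.card_insert_le _ _).trans (by simp)
    · ext x
      simp only [Set.mem_setOf_eq]
      constructor
      · intro h p hp
        have ha2 : a.2 = true := (Finset.mem_filter.mp haA).2
        have hb2 : b.2 = false := (Finset.mem_filter.mp hbB).2
        have hax : a.1 < x := by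
          have := h a (by simp); rw [ha2] at this; simpa using this
        have hbx : ¬ b.1 < x := by
          have := h b (by simp); rw [hb2] at this; simpa using this
        rcases Bool.eq_false_or_eq_true p.2 with hp2 | hp2
        · have hpA : p ∈ A := Finset.mem_filter.mpr ⟨hp, hp2⟩
          rw [hp2]; simp only [decide_eq_true_eq]
          exact lt_of_le_of_lt (hamax p hpA) hax
        · have hpB : p ∈ B := Finset.mem_filter.mpr ⟨hp, hp2⟩
          rw [hp2]; simp only [decide_eq_false_iff_not]
          intro hlt
          exact hbx (lt_of_le_of_lt (hbmin p hpB) hlt)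
      · intro h p hp
        apply h
        simp only [Finset.mem_insert, Finset.mem_singleton] at hp
        rcases hp with rfl | rfl
        · exact (Finset.mem_filter.mp haA).1
        · exact (Finset.mem_filter.mp hbB).1
  · obtain ⟨a, haA, hamax⟩ := A.exists_max_image Prod.fst hA
    refine ⟨{a}, by simp [(Finset.mem_filter.mp haA).1], by simp, ?_⟩
    ext x
    simp only [Set.mem_setOf_eq]
    constructor
    · intro h p hp
      have ha2 : a.2 = true := (Finset.mem_filter.mp haA).2
      have hax : a.1 < x := by
        have := h a (by simp); rw [ha2] at this; simpa using this
      rcases Bool.eq_false_or_eq_true p.2 with hp2 | hp2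
      · have hpA : p ∈ A := Finset.mem_filter.mpr ⟨hp, hp2⟩
        rw [hp2]; simp only [decide_eq_true_eq]
        exact lt_of_le_of_lt (hamax p hpA) hax
      · refine absurd (Finset.mem_filter.mpr ⟨hp, hp2⟩ : p ∈ B) ?_
        exact fun hm => hB ⟨p, hm⟩
    · intro h p hp
      apply h
      simp only [Finset.mem_singleton] at hp
      subst hp
      exact (Finset.mem_filter.mp haA).1
  · obtain ⟨b, hbB, hbmin⟩ := B.exists_min_image Prod.fst hB
    refine ⟨{b}, by simp [(Finset.mem_filter.mp hbB).1], by simp, ?_⟩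
    ext x
    simp only [Set.mem_setOf_eq]
    constructor
    · intro h p hp
      have hb2 : b.2 = false := (Finset.mem_filter.mp hbB).2
      have hbx : ¬ b.1 < x := by
        have := h b (by simp); rw [hb2] at this; simpa using this
      rcases Bool.eq_false_or_eq_true p.2 with hp2 | hp2
      · refine absurd (Finset.mem_filter.mpr ⟨hp, hp2⟩ : p ∈ A) ?_
        exact fun hm => hA ⟨p, hm⟩
      · have hpB : p ∈ B := Finset.mem_filter.mpr ⟨hp, hp2⟩
        rw [hp2]; simp only [decide_eq_false_iff_not]
        intro hlt
        exact hbx (lt_of_le_of_lt (hbmin p hpB) hlt)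
    · intro h p hp
      apply h
      simp only [Finset.mem_singleton] at hp
      subst hp
      exact (Finset.mem_filter.mp hbB).1
  · refine ⟨∅, by simp, by simp, ?_⟩
    ext x
    simp only [Set.mem_setOf_eq, Finset.notMem_empty, false_implies, implies_true, true_iff]
    intro p hp
    rcases Bool.eq_false_or_eq_true p.2 with hp2 | hp2
    · refine absurd (Finset.mem_filter.mpr ⟨hp, hp2⟩ : p ∈ A) ?_
      exact fun hm => hA ⟨p, hm⟩
    · refine absurd (Finset.mem_filter.mpr ⟨hp, hp2⟩ : p ∈ B) ?_
      exact fun hm => hB ⟨p, hm⟩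
end

section
/- Let d, t ∈ ℕ, let f_1, ..., f_t : ℝ^d → ℝ be functions, let s : ℝ → {0,1} be defined by s(x) = 1 iff x ≥ 0, and let F = {s∘(f_i + c) : 1 ≤ i ≤ t, c ∈ ℝ}. Then the information system (ℝ^d, F) satisfies the condition of reduction with parameter 2t: every compatible finite system of equations over attributes from F has a subsystem with at most 2t equations and the same solution set. -/
/-- Let `f₁, …, f_t : ℝ^d → ℝ` and let `F` consist of the attributes
`a ↦ s(fᵢ(a) + c)` for `1 ≤ i ≤ t`, `c ∈ ℝ`, where `s(x) = 1 ↔ x ≥ 0`. Then the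
information system `(ℝ^d, F)` satisfies the condition of reduction with parameter `2t`:
every compatible finite system of equations over attributes from `F` has a subsystem with
at most `2t` equations and the same solution set. -/
theorem stmt_15 (d t : ℕ) (f : Fin t → (Fin d → ℝ) → ℝ) :
    ∀ S : Finset (((Fin d → ℝ) → Bool) × Bool),
      (∀ q ∈ S, q.1 ∈ {g : (Fin d → ℝ) → Bool |
          ∃ (i : Fin t) (c : ℝ), g = fun a => decide (0 ≤ f i a + c)}) →
      (∃ a : Fin d → ℝ, ∀ q ∈ S, q.1 a = q.2) →
      ∃ T ⊆ S, T.card ≤ 2 * t ∧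
        {a : Fin d → ℝ | ∀ q ∈ T, q.1 a = q.2} =
          {a : Fin d → ℝ | ∀ q ∈ S, q.1 a = q.2} := by
  classical
  intro S hS _hcompat
  -- trivial case: empty system
  rcases eq_or_ne S ∅ with rfl | hSne
  · exact ⟨∅, le_refl _, by simp, rfl⟩
  obtain ⟨q0, hq0⟩ := Finset.nonempty_iff_ne_empty.2 hSne
  obtain ⟨i0, _⟩ := hS q0 hq0
  -- choose, for each equation, an index `I q` and constant `C q`
  have hS' : ∀ q : ((Fin d → ℝ) → Bool) × Bool, ∃ (i : Fin t) (c : ℝ),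
      q ∈ S → q.1 = fun a => decide (0 ≤ f i a + c) := by
    intro q
    by_cases hq : q ∈ S
    · obtain ⟨i, c, h⟩ := hS q hq
      exact ⟨i, c, fun _ => h⟩
    · exact ⟨i0, 0, fun h => absurd h hq⟩
  choose I C hIC using hS'
  -- group equations by index and sign
  set Sib : Fin t × Bool → Finset (((Fin d → ℝ) → Bool) × Bool) :=
    fun p => S.filter (fun q => I q = p.1 ∧ q.2 = p.2) with hSib
  -- weight: minimize C for positive constraints, maximize for negative
  set w : Fin t × Bool → (((Fin d → ℝ) → Bool) × Bool) → ℝ :=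
    fun p q => if p.2 then C q else -(C q) with hw
  have hpick : ∀ p : Fin t × Bool, ∃ q, (Sib p).Nonempty →
      q ∈ Sib p ∧ ∀ q' ∈ Sib p, w p q ≤ w p q' := by
    intro p
    by_cases h : (Sib p).Nonempty
    · obtain ⟨q, hq, hmin⟩ := Finset.exists_min_image (Sib p) (w p) h
      exact ⟨q, fun _ => ⟨hq, hmin⟩⟩
    · exact ⟨q0, fun h' => absurd h' h⟩
  choose pick hpickspec using hpick
  set P : Finset (Fin t × Bool) :=
    Finset.univ.filter (fun p => (Sib p).Nonempty) with hP
  refine ⟨P.image pick, ?_, ?_, ?_⟩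
  · intro q hq
    obtain ⟨p, hp, rfl⟩ := Finset.mem_image.1 hq
    have hpne : (Sib p).Nonempty := (Finset.mem_filter.1 hp).2
    exact Finset.mem_of_mem_filter _ (hpickspec p hpne).1
  · calc (P.image pick).card ≤ P.card := Finset.card_image_le
      _ ≤ (Finset.univ : Finset (Fin t × Bool)).card := Finset.card_filter_le _ _
      _ = 2 * t := by simp [Fintype.card_prod, mul_comm]
  · ext a
    simp only [Set.mem_setOf_eq]
    constructor
    · intro ha q hq
      have hqmem : q ∈ Sib (I q, q.2) := by
        simp [hSib, hq]
      have hpne : (Sib (I q, q.2)).Nonempty := ⟨q, hqmem⟩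
      have hpP : (I q, q.2) ∈ P := by simp [hP, hpne]
      obtain ⟨hpm, hpmin⟩ := hpickspec _ hpne
      set q' := pick (I q, q.2) with hq'
      have haq' : q'.1 a = q'.2 := ha q' (Finset.mem_image_of_mem pick hpP)
      have hq'S : q' ∈ S := Finset.mem_of_mem_filter _ hpm
      obtain ⟨hIq', hbq'⟩ := (Finset.mem_filter.1 hpm).2
      have hq1 : q.1 = fun a => decide (0 ≤ f (I q) a + C q) := hIC q hq
      have hIq'' : I q' = I q := hIq'
      have hq'1 : q'.1 = fun a => decide (0 ≤ f (I q) a + C q') := by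
        rw [← hIq'']; exact hIC q' hq'S
      have hmin := hpmin q hqmem
      rw [hq1]
      rw [hq'1] at haq'
      simp only at haq'
      cases hb : q.2 with
      | true =>
        rw [hb] at hbq' hmin
        simp only [hw, if_pos rfl] at hmin
        rw [hbq'] at haq'
        have h1 : (0:ℝ) ≤ f (I q) a + C q' := by
          simpa using haq'
        simp only [decide_eq_true_eq]
        linarith
      | false =>
        rw [hb] at hbq' hmin
        simp only [hw] at hmin
        norm_num at hmin
        rw [hbq'] at haq'
        have h1 : ¬ (0:ℝ) ≤ f (I q) a + C q' := by
          simpa using haq'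
        simp only [decide_eq_false_iff_not]
        push_neg at h1 ⊢
        linarith
    · intro ha q hq
      obtain ⟨p, hp, rfl⟩ := Finset.mem_image.1 hq
      have hpne : (Sib p).Nonempty := (Finset.mem_filter.1 hp).2
      exact ha _ (Finset.mem_of_mem_filter _ (hpickspec p hpne).1)
end
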